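/- arXiv:hep-th/0305038 — 2 statements merged into one kernel-verified Lean document; each statement's English description precedes it below -/
import Mathlib

section
/- With Δ = ∑_j D_j², each rational Dunkl operator commutes with Δ, and the Cherednik operator satisfies [𝒟_j, Δ] = −2D_j². -/
open Finset

/-- Partial derivative `∂_{x_j}`. -/
noncomputable def pd {N : ℕ} (j : Fin N) (f : (Fin N → ℝ) → ℝ) : (Fin N → ℝ) → ℝ :=
  fun t' => deriv (fun t => f (Function.update t' j t)) (t' j)

/-- The rational Dunkl operator. -/
noncomputable def Dunkl {N : ℕ} (β : ℝ) (j : Fin N) (f : (Fin N → ℝ) → ℝ) :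
    (Fin N → ℝ) → ℝ :=
  fun x => pd j f x +
    β * ∑ k ∈ univ.erase j, (f x - f (x ∘ ⇑(Equiv.swap j k))) / (x j - x k)

/-- The trigonometric Dunkl (Cherednik) operator (`β(j−1)` becomes `β * j` for
`Fin N`-indexed variables). -/
noncomputable def Cher {N : ℕ} (β : ℝ) (j : Fin N) (f : (Fin N → ℝ) → ℝ) :
    (Fin N → ℝ) → ℝ :=
  fun x => x j * pd j f x
    + β * ∑ k ∈ univ.filter (fun k => k < j),
        (x j / (x j - x k)) * (f x - f (x ∘ ⇑(Equiv.swap j k)))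
    + β * ∑ k ∈ univ.filter (fun k => j < k),
        (x k / (x j - x k)) * (f x - f (x ∘ ⇑(Equiv.swap j k)))
    - β * (j : ℕ) * f x

/-- `Δ = ∑_j D_j²`. -/
noncomputable def DeltaOp {N : ℕ} (β : ℝ) (f : (Fin N → ℝ) → ℝ) : (Fin N → ℝ) → ℝ :=
  fun x => ∑ j, Dunkl β j (Dunkl β j f) x

namespace DunklAux

variable {N : ℕ}

/-! ### Openness of the injective locus -/

lemma isOpen_inj : IsOpen {y : Fin N → ℝ | Function.Injective y} := by
  have : {y : Fin N → ℝ | Function.Injective y}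
      = ⋂ (p : Fin N × Fin N) (_ : p.1 ≠ p.2), {y | y p.1 ≠ y p.2} := by
    ext y
    simp only [Set.mem_setOf_eq, Set.mem_iInter]
    constructor
    · intro h p hp; exact fun he => hp (h he)
    · intro h a b hab
      by_contra hne
      exact h (a, b) hne hab
  rw [this]
  exact isOpen_iInter_of_finite fun p => isOpen_iInter_of_finite fun hp =>
    isOpen_ne_fun (continuous_apply p.1) (continuous_apply p.2)

lemma eventually_inj {x : Fin N → ℝ} (hx : Function.Injective x) :
    ∀ᶠ y in nhds x, Function.Injective y :=
  isOpen_inj.mem_nhds hx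

lemma inj_comp {x : Fin N → ℝ} (hx : Function.Injective x) (σ : Equiv.Perm (Fin N)) :
    Function.Injective (x ∘ σ) :=
  hx.comp σ.injective

/-! ### Swap combinatorics -/

lemma comp_swap_left (x : Fin N → ℝ) (a b : Fin N) : (x ∘ ⇑(Equiv.swap a b)) a = x b := by
  show x (Equiv.swap a b a) = x b; rw [Equiv.swap_apply_left]

lemma comp_swap_right (x : Fin N → ℝ) (a b : Fin N) : (x ∘ ⇑(Equiv.swap a b)) b = x a := by
  show x (Equiv.swap a b b) = x a; rw [Equiv.swap_apply_right]

lemma comp_swap_other (x : Fin N → ℝ) {a b c : Fin N} (h1 : c ≠ a) (h2 : c ≠ b) :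
    (x ∘ ⇑(Equiv.swap a b)) c = x c := by
  show x (Equiv.swap a b c) = x c; rw [Equiv.swap_apply_of_ne_of_ne h1 h2]

lemma comp_comp_swap (x : Fin N → ℝ) (σ τ : Equiv.Perm (Fin N)) :
    (x ∘ ⇑σ) ∘ ⇑τ = x ∘ ⇑(σ * τ) := rfl

lemma cycle_eq₁ {i j m : Fin N} (hij : i ≠ j) (him : i ≠ m) (hjm : j ≠ m) :
    Equiv.swap i m * Equiv.swap j i = Equiv.swap i j * Equiv.swap j m := by
  ext t
  simp only [Equiv.Perm.mul_apply, Equiv.swap_apply_def]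
  split_ifs <;> simp_all

lemma cycle_eq₂ {i j m : Fin N} (hij : i ≠ j) (him : i ≠ m) (hjm : j ≠ m) :
    Equiv.swap j m * Equiv.swap i m = Equiv.swap i m * Equiv.swap j i := by
  ext t
  simp only [Equiv.Perm.mul_apply, Equiv.swap_apply_def]
  split_ifs <;> simp_all

lemma cycle_eq₃ {i j m : Fin N} (hij : i ≠ j) (him : i ≠ m) (hjm : j ≠ m) :
    Equiv.swap j m * Equiv.swap i j = Equiv.swap j i * Equiv.swap i m := by
  ext t
  simp only [Equiv.Perm.mul_apply, Equiv.swap_apply_def]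
  split_ifs <;> simp_all

lemma swap_comm_disjoint {i j l k : Fin N} (h1 : i ≠ k) (h2 : i ≠ l) (h3 : j ≠ k) (h4 : j ≠ l) :
    Equiv.swap i j * Equiv.swap l k = Equiv.swap l k * Equiv.swap i j := by
  ext t
  simp only [Equiv.Perm.mul_apply, Equiv.swap_apply_def]
  split_ifs <;> simp_all

/-! ### `pd` basics -/

lemma pd_def (j : Fin N) (f : (Fin N → ℝ) → ℝ) (x : Fin N → ℝ) :
    pd j f x = deriv (fun t => f (Function.update x j t)) (x j) := rfl

lemma comp_update_perm (σ : Equiv.Perm (Fin N)) (x : Fin N → ℝ) (j : Fin N) (t : ℝ) :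
    (Function.update x j t) ∘ σ = Function.update (x ∘ σ) (σ.symm j) t := by
  funext m
  by_cases h : m = σ.symm j
  · subst h
    simp [Function.comp, Function.update_apply]
  · have h2 : σ m ≠ j := fun he => h (by simp [← he])
    simp [Function.comp, Function.update_apply, h, h2]

lemma pd_comp_perm (σ : Equiv.Perm (Fin N)) (f : (Fin N → ℝ) → ℝ) (j : Fin N)
    (x : Fin N → ℝ) :
    pd j (fun y => f (y ∘ σ)) x = pd (σ.symm j) f (x ∘ σ) := by
  unfold pd
  have h1 : (fun t => f ((Function.update x j t) ∘ σ))
      = fun t => f (Function.update (x ∘ σ) (σ.symm j) t) := by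
    funext t; rw [comp_update_perm]
  have h2 : (x ∘ σ) (σ.symm j) = x j := by simp
  rw [h1, h2]

lemma hasDerivAt_slice {f : (Fin N → ℝ) → ℝ} {x : Fin N → ℝ} (j : Fin N)
    (hf : DifferentiableAt ℝ f x) :
    HasDerivAt (fun t => f (Function.update x j t)) (fderiv ℝ f x (Pi.single j 1)) (x j) := by
  have h1 := hasDerivAt_update x j (x j)
  have h2 : HasFDerivAt f (fderiv ℝ f x) (Function.update x j (x j)) := by
    rw [Function.update_eq_self]; exact hf.hasFDerivAt
  exact (h2.comp_hasDerivAt (x j) h1)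

lemma pd_eq_fderiv {f : (Fin N → ℝ) → ℝ} {x : Fin N → ℝ} (j : Fin N)
    (hf : DifferentiableAt ℝ f x) :
    pd j f x = fderiv ℝ f x (Pi.single j 1) :=
  (hasDerivAt_slice j hf).deriv

lemma hasDerivAt_slice' {f : (Fin N → ℝ) → ℝ} {x : Fin N → ℝ} (j : Fin N)
    (hf : DifferentiableAt ℝ f x) :
    HasDerivAt (fun t => f (Function.update x j t)) (pd j f x) (x j) := by
  rw [pd_eq_fderiv j hf]; exact hasDerivAt_slice j hf

lemma pd_congr {f g : (Fin N → ℝ) → ℝ} {x : Fin N → ℝ} (h : f =ᶠ[nhds x] g) (j : Fin N) :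
    pd j f x = pd j g x := by
  apply Filter.EventuallyEq.deriv_eq
  have hc : ContinuousAt (Function.update x j) (x j) := (hasDerivAt_update x j (x j)).continuousAt
  have ht : Filter.Tendsto (Function.update x j) (nhds (x j)) (nhds x) := by
    have := hc.tendsto
    rwa [Function.update_eq_self] at this
  exact h.comp_tendsto ht

/-! ### Smoothness on the injective locus -/

/-- smooth at every injective point -/
def SmO (f : (Fin N → ℝ) → ℝ) : Prop :=
  ∀ y : Fin N → ℝ, Function.Injective y → ContDiffAt ℝ (⊤ : ℕ∞) f y

lemma sdiff {f : (Fin N → ℝ) → ℝ} {y : Fin N → ℝ} (hy : Function.Injective y)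
    (hf : SmO f) : DifferentiableAt ℝ f y := (hf y hy).differentiableAt (by simp)

noncomputable def permCLM (σ : Equiv.Perm (Fin N)) : (Fin N → ℝ) →L[ℝ] (Fin N → ℝ) :=
  ContinuousLinearMap.pi fun i => ContinuousLinearMap.proj (σ i)

lemma smO_comp_perm {f : (Fin N → ℝ) → ℝ} (hf : SmO f) (σ : Equiv.Perm (Fin N)) :
    SmO (fun y => f (y ∘ σ)) := by
  intro y hy
  have h1 : ContDiffAt ℝ (⊤ : ℕ∞) f (y ∘ σ) := hf _ (inj_comp hy σ)
  have h2 : ContDiffAt ℝ (⊤ : ℕ∞) (fun y : Fin N → ℝ => y ∘ σ) y :=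
    (permCLM σ).contDiff.contDiffAt
  exact h1.comp y h2

/-- the divided-difference operator -/
noncomputable def Top (j k : Fin N) (f : (Fin N → ℝ) → ℝ) : (Fin N → ℝ) → ℝ :=
  fun x => (f x - f (x ∘ ⇑(Equiv.swap j k))) / (x j - x k)

lemma smO_top {f : (Fin N → ℝ) → ℝ} (hf : SmO f) {j k : Fin N} (hjk : j ≠ k) :
    SmO (Top j k f) := by
  intro y hy
  have hnum : ContDiffAt ℝ (⊤ : ℕ∞) (fun x => f x - f (x ∘ ⇑(Equiv.swap j k))) y :=
    (hf y hy).sub (smO_comp_perm hf _ y hy)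
  have hden : ContDiffAt ℝ (⊤ : ℕ∞) (fun x : Fin N → ℝ => x j - x k) y :=
    ((ContinuousLinearMap.proj (R := ℝ) (φ := fun _ : Fin N => ℝ) j).contDiff.sub
      (ContinuousLinearMap.proj k).contDiff).contDiffAt
  exact hnum.div hden (sub_ne_zero.mpr (fun h => hjk (hy h)))

lemma pd_eventually {f : (Fin N → ℝ) → ℝ} (hf : SmO f) {x : Fin N → ℝ}
    (hx : Function.Injective x) (j : Fin N) :
    pd j f =ᶠ[nhds x] fun z => fderiv ℝ f z (Pi.single j 1) := by
  filter_upwards [eventually_inj hx] with z hz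
  exact pd_eq_fderiv j ((hf z hz).differentiableAt (by simp))

lemma smO_fderiv_apply {f : (Fin N → ℝ) → ℝ} (hf : SmO f) (j : Fin N) :
    SmO (fun z => fderiv ℝ f z (Pi.single j 1)) := by
  intro y hy
  have h1 : ContDiffAt ℝ (⊤ : ℕ∞) (fderiv ℝ f) y := (hf y hy).fderiv_right (m := (⊤ : ℕ∞)) (by simp)
  exact h1.clm_apply contDiffAt_const

lemma smO_pd {f : (Fin N → ℝ) → ℝ} (hf : SmO f) (j : Fin N) : SmO (pd j f) := by
  intro y hy
  exact (smO_fderiv_apply hf j y hy).congr_of_eventuallyEq (pd_eventually hf hy j)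

lemma dunkl_eq_top (β : ℝ) (j : Fin N) (f : (Fin N → ℝ) → ℝ) :
    Dunkl β j f = fun x => pd j f x + β * ∑ k ∈ univ.erase j, Top j k f x := rfl

lemma smO_dunkl {f : (Fin N → ℝ) → ℝ} (hf : SmO f) (β : ℝ) (j : Fin N) :
    SmO (Dunkl β j f) := by
  intro y hy
  have h : ContDiffAt ℝ (⊤ : ℕ∞) (fun x => pd j f x + β * ∑ k ∈ univ.erase j, Top j k f x) y := by
    refine (smO_pd hf j y hy).add (contDiffAt_const.mul (ContDiffAt.sum fun k hk => ?_))
    exact smO_top hf (Finset.ne_of_mem_erase hk).symm y hy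
  exact h.congr_of_eventuallyEq (by filter_upwards with z; rfl)

/-! ### pointwise pd calculus -/

lemma pd_pd_symm {f : (Fin N → ℝ) → ℝ} (hf : SmO f) {x : Fin N → ℝ}
    (hx : Function.Injective x) (i j : Fin N) :
    pd i (pd j f) x = pd j (pd i f) x := by
  have key : ∀ a b : Fin N, pd a (pd b f) x
      = fderiv ℝ (fderiv ℝ f) x (Pi.single a 1) (Pi.single b 1) := by
    intro a b
    rw [pd_congr (pd_eventually hf hx b) a]
    have hdiff : DifferentiableAt ℝ (fderiv ℝ f) x :=
      (((hf x hx).fderiv_right (m := (⊤ : ℕ∞)) (by simp))).differentiableAt (by simp)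
    rw [pd_eq_fderiv a (hdiff.clm_apply (differentiableAt_const _))]
    rw [fderiv_clm_apply hdiff (differentiableAt_const _)]
    simp
  rw [key i j, key j i]
  exact ((hf x hx).isSymmSndFDerivAt (by rw [minSmoothness_of_isRCLikeNormedField]; exact WithTop.coe_le_coe.mpr le_top)).eq _ _

lemma pd_add {g h : (Fin N → ℝ) → ℝ} {x : Fin N → ℝ} (j : Fin N)
    (hg : DifferentiableAt ℝ g x) (hh : DifferentiableAt ℝ h x) :
    pd j (fun z => g z + h z) x = pd j g x + pd j h x :=
  ((hasDerivAt_slice' j hg).add (hasDerivAt_slice' j hh)).deriv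

lemma pd_sub {g h : (Fin N → ℝ) → ℝ} {x : Fin N → ℝ} (j : Fin N)
    (hg : DifferentiableAt ℝ g x) (hh : DifferentiableAt ℝ h x) :
    pd j (fun z => g z - h z) x = pd j g x - pd j h x :=
  ((hasDerivAt_slice' j hg).sub (hasDerivAt_slice' j hh)).deriv

lemma pd_const_mul (c : ℝ) {g : (Fin N → ℝ) → ℝ} {x : Fin N → ℝ} (j : Fin N)
    (hg : DifferentiableAt ℝ g x) :
    pd j (fun z => c * g z) x = c * pd j g x :=
  ((hasDerivAt_slice' j hg).const_mul c).deriv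

lemma pd_sum {ι : Type*} {s : Finset ι} {g : ι → (Fin N → ℝ) → ℝ} {x : Fin N → ℝ} (j : Fin N)
    (hg : ∀ k ∈ s, DifferentiableAt ℝ (g k) x) :
    pd j (fun z => ∑ k ∈ s, g k z) x = ∑ k ∈ s, pd j (g k) x := by
  have h : HasDerivAt (fun t => ∑ k ∈ s, g k (Function.update x j t))
      (∑ k ∈ s, pd j (g k) x) (x j) :=
    HasDerivAt.fun_sum fun k hk => hasDerivAt_slice' j (hg k hk)
  exact h.deriv

lemma diff_comp_swap {f : (Fin N → ℝ) → ℝ} (hf : SmO f) {x : Fin N → ℝ}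
    (hx : Function.Injective x) (a b : Fin N) :
    DifferentiableAt ℝ (fun y => f (y ∘ ⇑(Equiv.swap a b))) x :=
  sdiff hx (smO_comp_perm hf (Equiv.swap a b))

/-- pd of Top, generic index case. -/
lemma pd_top_of_ne {f : (Fin N → ℝ) → ℝ} (hf : SmO f) {x : Fin N → ℝ}
    (hx : Function.Injective x) {i j k : Fin N} (hij : i ≠ j) (hik : i ≠ k) (hjk : j ≠ k) :
    pd i (Top j k f) x = (pd i f x - pd i f (x ∘ ⇑(Equiv.swap j k))) / (x j - x k) := by
  have hfσ : DifferentiableAt ℝ (fun y => f (y ∘ ⇑(Equiv.swap j k))) x :=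
    diff_comp_swap hf hx j k
  have hD : HasDerivAt (fun t => Top j k f (Function.update x i t))
      ((pd i f x - pd i (fun y => f (y ∘ ⇑(Equiv.swap j k))) x) / (x j - x k)) (x i) := by
    have hnum : HasDerivAt
        (fun t => f (Function.update x i t) - f (Function.update x i t ∘ ⇑(Equiv.swap j k)))
        (pd i f x - pd i (fun y => f (y ∘ ⇑(Equiv.swap j k))) x) (x i) :=
      (hasDerivAt_slice' i (sdiff hx hf)).sub (hasDerivAt_slice' i hfσ)
    have heq : (fun t => Top j k f (Function.update x i t))
        = fun t => (f (Function.update x i t) - f (Function.update x i t ∘ ⇑(Equiv.swap j k)))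
            / (x j - x k) := by
      funext t
      simp only [Top, Function.update_of_ne hij.symm, Function.update_of_ne hik.symm]
    rw [heq]
    exact hnum.div_const _
  rw [pd_def i (Top j k f) x, hD.deriv, pd_comp_perm (Equiv.swap j k) f i x, Equiv.symm_swap,
    Equiv.swap_apply_of_ne_of_ne hij hik]

/-- pd of Top, coincidence case `k = i`. -/
lemma pd_top_self {f : (Fin N → ℝ) → ℝ} (hf : SmO f) {x : Fin N → ℝ}
    (hx : Function.Injective x) {i j : Fin N} (hij : i ≠ j) :
    pd i (Top j i f) x = (pd i f x - pd j f (x ∘ ⇑(Equiv.swap j i))) / (x j - x i)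
      + (f x - f (x ∘ ⇑(Equiv.swap j i))) / (x j - x i) ^ 2 := by
  have hfσ : DifferentiableAt ℝ (fun y => f (y ∘ ⇑(Equiv.swap j i))) x :=
    diff_comp_swap hf hx j i
  have hd : x j - x i ≠ 0 := sub_ne_zero.mpr fun h => hij (hx h).symm
  have hnum : HasDerivAt
      (fun t => f (Function.update x i t) - f (Function.update x i t ∘ ⇑(Equiv.swap j i)))
      (pd i f x - pd i (fun y => f (y ∘ ⇑(Equiv.swap j i))) x) (x i) :=
    (hasDerivAt_slice' i (sdiff hx hf)).sub (hasDerivAt_slice' i hfσ)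
  have hden : HasDerivAt (fun t => x j - t) (-1) (x i) := by
    simpa using (hasDerivAt_id (x i)).const_sub (x j)
  have hD := hnum.div hden hd
  have heq : (fun t => Top j i f (Function.update x i t))
      = fun t => (f (Function.update x i t) - f (Function.update x i t ∘ ⇑(Equiv.swap j i)))
          / (x j - t) := by
    funext t
    simp only [Top, Function.update_of_ne hij.symm, Function.update_self]
  have hpd : pd i (Top j i f) x
      = ((pd i f x - pd i (fun y => f (y ∘ ⇑(Equiv.swap j i))) x) * (x j - x i)
        - (f x - f (x ∘ ⇑(Equiv.swap j i))) * (-1)) / (x j - x i) ^ 2 := by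
    rw [pd_def i (Top j i f) x]
    rw [heq]
    have := hD.deriv
    simpa [Function.update_self, Function.update_of_ne hij.symm, Pi.div_def] using this
  rw [hpd, pd_comp_perm (Equiv.swap j i) f i x, Equiv.symm_swap, Equiv.swap_apply_right]
  field_simp
  ring

/-- pd of coordinate multiple. -/
lemma pd_coord_mul {g : (Fin N → ℝ) → ℝ} {x : Fin N → ℝ} (k j : Fin N)
    (hg : DifferentiableAt ℝ g x) :
    pd k (fun y => y j * g y) x = (if k = j then g x else 0) + x j * pd k g x := by
  by_cases h : k = j
  · subst h
    have hD : HasDerivAt (fun t => t * g (Function.update x k t))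
        (1 * g x + x k * pd k g x) (x k) := by
      have := (hasDerivAt_id (x k)).mul (hasDerivAt_slice' k hg)
      simpa [Pi.mul_def] using this
    have heq : pd k (fun y => y k * g y) x
        = deriv (fun t => t * g (Function.update x k t)) (x k) := by
      rw [pd_def]; congr 1; funext t; simp
    rw [heq, hD.deriv, if_pos rfl, one_mul]
  · have hD : HasDerivAt (fun t => x j * g (Function.update x k t))
        (x j * pd k g x) (x k) := (hasDerivAt_slice' k hg).const_mul (x j)
    have heq : pd k (fun y => y j * g y) x
        = deriv (fun t => x j * g (Function.update x k t)) (x k) := by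
      rw [pd_def]; congr 1; funext t; simp [Function.update_of_ne (Ne.symm h)]
    rw [heq, hD.deriv, if_neg h, zero_add]

/-! ### the β² scalar identities -/

lemma cycle_eq₄ {i j m : Fin N} (hij : i ≠ j) (him : i ≠ m) (hjm : j ≠ m) :
    Equiv.swap i m * Equiv.swap j m = Equiv.swap j m * Equiv.swap i j := by
  ext t
  simp only [Equiv.Perm.mul_apply, Equiv.swap_apply_def]
  split_ifs <;> simp_all

lemma hne {x : Fin N → ℝ} (hx : Function.Injective x) {a b : Fin N} (h : a ≠ b) :
    x a - x b ≠ 0 :=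
  sub_ne_zero.mpr fun he => h (hx he)

/-- diagonal mixed term, case `l = j`, `k = i`. -/
lemma partC1 {f : (Fin N → ℝ) → ℝ} {x : Fin N → ℝ} (hx : Function.Injective x)
    {i j : Fin N} (hij : i ≠ j) :
    Top i j (Top j i f) x = Top j i (Top i j f) x := by
  simp only [Top]
  rw [comp_comp_swap x (Equiv.swap i j) (Equiv.swap j i),
      comp_comp_swap x (Equiv.swap j i) (Equiv.swap i j),
      Equiv.swap_comm j i, Equiv.swap_mul_self,
      comp_swap_right x i j, comp_swap_left x i j]
  have h1 := hne hx hij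
  have h2 := hne hx hij.symm
  simp only [Equiv.Perm.coe_one, Function.comp_id]
  field_simp
  ring

/-- the `m`-group identity. -/
lemma partC2 {f : (Fin N → ℝ) → ℝ} {x : Fin N → ℝ} (hx : Function.Injective x)
    {i j m : Fin N} (hij : i ≠ j) (him : i ≠ m) (hjm : j ≠ m) :
    Top i m (Top j i f) x + Top i j (Top j m f) x + Top i m (Top j m f) x
      = Top j m (Top i j f) x + Top j i (Top i m f) x + Top j m (Top i m f) x := by
  have hji := hij.symm
  have hmi := him.symm
  have hmj := hjm.symm
  have hFmi : Top i m (Top j i f) x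
      = ((f x - f (x ∘ ⇑(Equiv.swap i j))) / (x j - x i)
        - (f (x ∘ ⇑(Equiv.swap i m)) - f (x ∘ ⇑(Equiv.swap i j * Equiv.swap j m)))
            / (x j - x m)) / (x i - x m) := by
    simp only [Top]
    rw [comp_comp_swap x (Equiv.swap i m) (Equiv.swap j i), cycle_eq₁ hij him hjm,
        Equiv.swap_comm j i, comp_swap_other x hji hjm, comp_swap_left x i m]
  have hFjm : Top i j (Top j m f) x
      = ((f x - f (x ∘ ⇑(Equiv.swap j m))) / (x j - x m)
        - (f (x ∘ ⇑(Equiv.swap i j)) - f (x ∘ ⇑(Equiv.swap i j * Equiv.swap j m)))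
            / (x i - x m)) / (x i - x j) := by
    simp only [Top]
    rw [comp_comp_swap x (Equiv.swap i j) (Equiv.swap j m),
        comp_swap_right x i j, comp_swap_other x hmi hmj]
  have hFmm : Top i m (Top j m f) x
      = ((f x - f (x ∘ ⇑(Equiv.swap j m))) / (x j - x m)
        - (f (x ∘ ⇑(Equiv.swap i m)) - f (x ∘ ⇑(Equiv.swap j m * Equiv.swap i j)))
            / (x j - x i)) / (x i - x m) := by
    simp only [Top]
    rw [comp_comp_swap x (Equiv.swap i m) (Equiv.swap j m), cycle_eq₄ hij him hjm,
        comp_swap_other x hji hjm, comp_swap_right x i m]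
  have hGmj : Top j m (Top i j f) x
      = ((f x - f (x ∘ ⇑(Equiv.swap i j))) / (x i - x j)
        - (f (x ∘ ⇑(Equiv.swap j m)) - f (x ∘ ⇑(Equiv.swap j m * Equiv.swap i j)))
            / (x i - x m)) / (x j - x m) := by
    simp only [Top]
    rw [comp_comp_swap x (Equiv.swap j m) (Equiv.swap i j),
        comp_swap_other x hij him, comp_swap_left x j m]
  have hGim : Top j i (Top i m f) x
      = ((f x - f (x ∘ ⇑(Equiv.swap i m))) / (x i - x m)
        - (f (x ∘ ⇑(Equiv.swap i j)) - f (x ∘ ⇑(Equiv.swap j m * Equiv.swap i j)))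
            / (x j - x m)) / (x j - x i) := by
    simp only [Top]
    rw [comp_comp_swap x (Equiv.swap j i) (Equiv.swap i m), ← cycle_eq₃ hij him hjm,
        Equiv.swap_comm j i, comp_swap_left x i j, comp_swap_other x hmi hmj]
  have hGmm : Top j m (Top i m f) x
      = ((f x - f (x ∘ ⇑(Equiv.swap i m))) / (x i - x m)
        - (f (x ∘ ⇑(Equiv.swap j m)) - f (x ∘ ⇑(Equiv.swap i j * Equiv.swap j m)))
            / (x i - x j)) / (x j - x m) := by
    simp only [Top]
    rw [comp_comp_swap x (Equiv.swap j m) (Equiv.swap i m), cycle_eq₂ hij him hjm,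
        cycle_eq₁ hij him hjm, comp_swap_other x hij him, comp_swap_right x j m]
  rw [hFmi, hFjm, hFmm, hGmj, hGim, hGmm]
  have d1 := hne hx hij
  have d2 := hne hx hji
  have d3 := hne hx him
  have d4 := hne hx hmi
  have d5 := hne hx hjm
  have d6 := hne hx hmj
  field_simp
  ring

/-- off-diagonal mixed term: fully distinct indices commute. -/
lemma partC5 {f : (Fin N → ℝ) → ℝ} {x : Fin N → ℝ} (hx : Function.Injective x)
    {i j l k : Fin N} (hij : i ≠ j) (hil : i ≠ l) (hik : i ≠ k) (hjl : j ≠ l)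
    (hjk : j ≠ k) (hlk : l ≠ k) :
    Top i l (Top j k f) x = Top j k (Top i l f) x := by
  simp only [Top]
  rw [comp_comp_swap x (Equiv.swap i l) (Equiv.swap j k),
      comp_comp_swap x (Equiv.swap j k) (Equiv.swap i l),
      swap_comm_disjoint hjl hij.symm hlk.symm hik.symm,
      comp_swap_other x hij.symm hjl, comp_swap_other x hik.symm hlk.symm,
      comp_swap_other x hij hik, comp_swap_other x hjl.symm hlk]
  have d1 := hne hx hil
  have d2 := hne hx hjk
  field_simp
  ring


/-! ### expansion of `Dunkl ∘ Dunkl` -/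

lemma dunkl_apply (β : ℝ) (j : Fin N) (f : (Fin N → ℝ) → ℝ) (x : Fin N → ℝ) :
    Dunkl β j f x = pd j f x + β * ∑ k ∈ univ.erase j, Top j k f x := rfl

lemma top_dunkl (β : ℝ) (i l j : Fin N) (f : (Fin N → ℝ) → ℝ) (x : Fin N → ℝ) :
    Top i l (Dunkl β j f) x
      = Top i l (pd j f) x + β * ∑ k ∈ univ.erase j, Top i l (Top j k f) x := by
  simp only [Top, Dunkl]
  rw [← Finset.sum_div, Finset.sum_sub_distrib]
  ring

lemma dunkl_dunkl {f : (Fin N → ℝ) → ℝ} (hf : SmO f) {x : Fin N → ℝ}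
    (hx : Function.Injective x) (β : ℝ) (i j : Fin N) :
    Dunkl β i (Dunkl β j f) x
      = pd i (pd j f) x
        + β * ∑ k ∈ univ.erase j, pd i (Top j k f) x
        + β * ∑ l ∈ univ.erase i, Top i l (pd j f) x
        + β ^ 2 * ∑ l ∈ univ.erase i, ∑ k ∈ univ.erase j, Top i l (Top j k f) x := by
  have hTdiff : ∀ k ∈ univ.erase j, DifferentiableAt ℝ (Top j k f) x :=
    fun k hk => sdiff hx (smO_top hf (Finset.ne_of_mem_erase hk).symm)
  have hsumdiff : DifferentiableAt ℝ (fun z => ∑ k ∈ univ.erase j, Top j k f z) x :=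
    DifferentiableAt.fun_sum hTdiff
  have h1 : pd i (Dunkl β j f) x
      = pd i (pd j f) x + β * ∑ k ∈ univ.erase j, pd i (Top j k f) x := by
    rw [dunkl_eq_top β j f,
      pd_add i (sdiff hx (smO_pd hf j)) (hsumdiff.const_mul β),
      pd_const_mul β i hsumdiff, pd_sum i hTdiff]
  rw [dunkl_apply β i (Dunkl β j f) x, h1,
    Finset.sum_congr rfl (fun l _ => top_dunkl β i l j f x),
    Finset.sum_add_distrib, ← Finset.mul_sum]
  ring

/-! ### the first-order (β) symmetry -/

lemma pd_top_swap {f : (Fin N → ℝ) → ℝ} (hf : SmO f) {x : Fin N → ℝ}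
    (hx : Function.Injective x) {i j k : Fin N} (hij : i ≠ j) (hik : i ≠ k) (hjk : j ≠ k) :
    pd i (Top j k f) x = Top j k (pd i f) x :=
  pd_top_of_ne hf hx hij hik hjk

lemma partB {f : (Fin N → ℝ) → ℝ} (hf : SmO f) {x : Fin N → ℝ}
    (hx : Function.Injective x) {i j : Fin N} (hij : i ≠ j) :
    ∑ k ∈ univ.erase j, pd i (Top j k f) x + ∑ l ∈ univ.erase i, Top i l (pd j f) x
      = ∑ k ∈ univ.erase i, pd j (Top i k f) x + ∑ l ∈ univ.erase j, Top j l (pd i f) x := by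
  have hiej : i ∈ univ.erase j := Finset.mem_erase.mpr ⟨hij, Finset.mem_univ i⟩
  have hjei : j ∈ univ.erase i := Finset.mem_erase.mpr ⟨hij.symm, Finset.mem_univ j⟩
  rw [← Finset.add_sum_erase _ (fun k => pd i (Top j k f) x) hiej,
      ← Finset.add_sum_erase _ (fun l => Top i l (pd j f) x) hjei,
      ← Finset.add_sum_erase _ (fun k => pd j (Top i k f) x) hjei,
      ← Finset.add_sum_erase _ (fun l => Top j l (pd i f) x) hiej]
  have hEE : (univ.erase i).erase j = (univ.erase j).erase i := Finset.erase_right_comm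
  rw [hEE]
  have hmem : ∀ k ∈ (univ.erase j).erase i, k ≠ i ∧ k ≠ j := fun k hk =>
    ⟨(Finset.mem_erase.mp hk).1, (Finset.mem_erase.mp ((Finset.mem_erase.mp hk).2)).1⟩
  rw [Finset.sum_congr rfl (fun k hk => pd_top_swap hf hx hij ((hmem k hk).1).symm
      ((hmem k hk).2).symm)]
  rw [Finset.sum_congr rfl (fun k hk => pd_top_swap hf hx hij.symm ((hmem k hk).2).symm
      ((hmem k hk).1).symm)]
  have key : pd i (Top j i f) x + Top i j (pd j f) x
      = pd j (Top i j f) x + Top j i (pd i f) x := by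
    rw [pd_top_self hf hx hij, pd_top_self hf hx hij.symm]
    simp only [Top]
    rw [Equiv.swap_comm j i]
    have d1 := hne hx hij
    have d2 := hne hx hij.symm
    field_simp
    ring
  linarith [key]

/-! ### the second-order (β²) symmetry -/

lemma double_split (F : Fin N → Fin N → ℝ) {i j : Fin N} (hij : i ≠ j) :
    ∑ l ∈ univ.erase i, ∑ k ∈ univ.erase j, F l k
      = F j i
        + (∑ m ∈ (univ.erase j).erase i, F m i
          + ∑ m ∈ (univ.erase j).erase i, F j m
          + ∑ m ∈ (univ.erase j).erase i, F m m)
        + ∑ l ∈ (univ.erase j).erase i, ∑ k ∈ ((univ.erase j).erase i).erase l, F l k := by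
  have hiej : i ∈ univ.erase j := Finset.mem_erase.mpr ⟨hij, Finset.mem_univ i⟩
  have hjei : j ∈ univ.erase i := Finset.mem_erase.mpr ⟨hij.symm, Finset.mem_univ j⟩
  have hEE : (univ.erase i).erase j = (univ.erase j).erase i := Finset.erase_right_comm
  rw [Finset.sum_congr rfl
      (fun l _ => (Finset.add_sum_erase _ (fun k => F l k) hiej).symm),
    Finset.sum_add_distrib,
    ← Finset.add_sum_erase _ (fun l => F l i) hjei,
    ← Finset.add_sum_erase _ (fun l => ∑ k ∈ (univ.erase j).erase i, F l k) hjei,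
    hEE,
    Finset.sum_congr rfl
      (fun l hl => (Finset.add_sum_erase _ (fun k => F l k) hl).symm),
    Finset.sum_add_distrib]
  ring

lemma partC {f : (Fin N → ℝ) → ℝ} {x : Fin N → ℝ}
    (hx : Function.Injective x) {i j : Fin N} (hij : i ≠ j) :
    ∑ l ∈ univ.erase i, ∑ k ∈ univ.erase j, Top i l (Top j k f) x
      = ∑ l ∈ univ.erase j, ∑ k ∈ univ.erase i, Top j l (Top i k f) x := by
  rw [double_split (fun l k => Top i l (Top j k f) x) hij,
      double_split (fun l k => Top j l (Top i k f) x) hij.symm]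
  have hEE : (univ.erase i).erase j = (univ.erase j).erase i := Finset.erase_right_comm
  rw [hEE]
  have hmem : ∀ k ∈ (univ.erase j).erase i, k ≠ i ∧ k ≠ j := fun k hk =>
    ⟨(Finset.mem_erase.mp hk).1, (Finset.mem_erase.mp ((Finset.mem_erase.mp hk).2)).1⟩
  have e1 : Top i j (Top j i f) x = Top j i (Top i j f) x := partC1 hx hij
  have e2 : ∑ m ∈ (univ.erase j).erase i, Top i m (Top j i f) x
        + ∑ m ∈ (univ.erase j).erase i, Top i j (Top j m f) x
        + ∑ m ∈ (univ.erase j).erase i, Top i m (Top j m f) x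
      = ∑ m ∈ (univ.erase j).erase i, Top j m (Top i j f) x
        + ∑ m ∈ (univ.erase j).erase i, Top j i (Top i m f) x
        + ∑ m ∈ (univ.erase j).erase i, Top j m (Top i m f) x := by
    rw [← Finset.sum_add_distrib, ← Finset.sum_add_distrib,
        ← Finset.sum_add_distrib, ← Finset.sum_add_distrib]
    exact Finset.sum_congr rfl fun m hm =>
      partC2 hx hij ((hmem m hm).1).symm ((hmem m hm).2).symm
  have e3 : ∑ l ∈ (univ.erase j).erase i, ∑ k ∈ ((univ.erase j).erase i).erase l,
        Top i l (Top j k f) x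
      = ∑ l ∈ (univ.erase j).erase i, ∑ k ∈ ((univ.erase j).erase i).erase l,
        Top j l (Top i k f) x := by
    have step1 : ∀ l ∈ (univ.erase j).erase i, ∀ k ∈ ((univ.erase j).erase i).erase l,
        Top i l (Top j k f) x = Top j k (Top i l f) x := by
      intro l hl k hk
      have hk' := Finset.mem_of_mem_erase hk
      have hkl : k ≠ l := (Finset.mem_erase.mp hk).1
      exact partC5 hx hij ((hmem l hl).1).symm ((hmem k hk').1).symm
        ((hmem l hl).2).symm ((hmem k hk').2).symm hkl.symm
    rw [Finset.sum_congr rfl fun l hl => Finset.sum_congr rfl fun k hk => step1 l hl k hk]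
    refine Finset.sum_comm' fun a b => ?_
    constructor
    · rintro ⟨ha, hb⟩
      exact ⟨Finset.mem_erase.mpr ⟨(Finset.mem_erase.mp hb).1.symm, ha⟩,
        Finset.mem_of_mem_erase hb⟩
    · rintro ⟨ha, hb⟩
      exact ⟨Finset.mem_of_mem_erase ha, Finset.mem_erase.mpr
        ⟨(Finset.mem_erase.mp ha).1.symm, hb⟩⟩
  rw [e1, e2, e3]

/-! ### commutativity of Dunkl operators -/

lemma dunkl_comm {f : (Fin N → ℝ) → ℝ} (hf : SmO f) {x : Fin N → ℝ}
    (hx : Function.Injective x) (β : ℝ) (i j : Fin N) :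
    Dunkl β i (Dunkl β j f) x = Dunkl β j (Dunkl β i f) x := by
  by_cases hij : i = j
  · subst hij; rfl
  rw [dunkl_dunkl hf hx β i j, dunkl_dunkl hf hx β j i,
    pd_pd_symm hf hx i j, partC hx hij]
  have hB : β * (∑ k ∈ univ.erase j, pd i (Top j k f) x
        + ∑ l ∈ univ.erase i, Top i l (pd j f) x)
      = β * (∑ k ∈ univ.erase i, pd j (Top i k f) x
        + ∑ l ∈ univ.erase j, Top j l (pd i f) x) := by
    rw [partB hf hx hij]
  rw [mul_add, mul_add] at hB
  linarith [hB]

/-! ### congruence and linearity of Dunkl at a point -/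

lemma dunkl_congr {g h : (Fin N → ℝ) → ℝ} (hgh : ∀ y, Function.Injective y → g y = h y)
    {x : Fin N → ℝ} (hx : Function.Injective x) (β : ℝ) (k : Fin N) :
    Dunkl β k g x = Dunkl β k h x := by
  rw [dunkl_apply, dunkl_apply]
  have h1 : pd k g x = pd k h x :=
    pd_congr (by filter_upwards [eventually_inj hx] with z hz using hgh z hz) k
  rw [h1]
  congr 2
  refine Finset.sum_congr rfl fun m _ => ?_
  simp only [Top]
  rw [hgh x hx, hgh _ (inj_comp hx _)]

lemma dunkl_add {g h : (Fin N → ℝ) → ℝ} {x : Fin N → ℝ} (β : ℝ) (k : Fin N)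
    (hg : DifferentiableAt ℝ g x) (hh : DifferentiableAt ℝ h x) :
    Dunkl β k (fun z => g z + h z) x = Dunkl β k g x + Dunkl β k h x := by
  rw [dunkl_apply, dunkl_apply, dunkl_apply, pd_add k hg hh]
  have h1 : ∀ m ∈ univ.erase k, Top k m (fun z => g z + h z) x = Top k m g x + Top k m h x :=
    fun m _ => by simp only [Top]; ring
  rw [Finset.sum_congr rfl h1, Finset.sum_add_distrib]
  ring

lemma dunkl_sub {g h : (Fin N → ℝ) → ℝ} {x : Fin N → ℝ} (β : ℝ) (k : Fin N)
    (hg : DifferentiableAt ℝ g x) (hh : DifferentiableAt ℝ h x) :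
    Dunkl β k (fun z => g z - h z) x = Dunkl β k g x - Dunkl β k h x := by
  rw [dunkl_apply, dunkl_apply, dunkl_apply, pd_sub k hg hh]
  have h1 : ∀ m ∈ univ.erase k, Top k m (fun z => g z - h z) x = Top k m g x - Top k m h x :=
    fun m _ => by simp only [Top]; ring
  rw [Finset.sum_congr rfl h1, Finset.sum_sub_distrib]
  ring

lemma dunkl_const_mul {g : (Fin N → ℝ) → ℝ} {x : Fin N → ℝ} (β c : ℝ) (k : Fin N)
    (hg : DifferentiableAt ℝ g x) :
    Dunkl β k (fun z => c * g z) x = c * Dunkl β k g x := by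
  rw [dunkl_apply, dunkl_apply, pd_const_mul c k hg]
  have h1 : ∀ m ∈ univ.erase k, Top k m (fun z => c * g z) x = c * Top k m g x :=
    fun m _ => by simp only [Top]; ring
  rw [Finset.sum_congr rfl h1, ← Finset.mul_sum]
  ring

lemma dunkl_sum {ι : Type*} {s : Finset ι} {g : ι → (Fin N → ℝ) → ℝ} {x : Fin N → ℝ}
    (β : ℝ) (k : Fin N) (hg : ∀ i ∈ s, DifferentiableAt ℝ (g i) x) :
    Dunkl β k (fun z => ∑ i ∈ s, g i z) x = ∑ i ∈ s, Dunkl β k (g i) x := by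
  rw [dunkl_apply, pd_sum k hg]
  have h1 : ∀ m ∈ univ.erase k, Top k m (fun z => ∑ i ∈ s, g i z) x
      = ∑ i ∈ s, Top k m (g i) x := by
    intro m _
    simp only [Top]
    rw [← Finset.sum_sub_distrib, Finset.sum_div]
  rw [Finset.sum_congr rfl h1, Finset.sum_comm,
    Finset.sum_congr rfl (fun i (_ : i ∈ s) => dunkl_apply β k (g i) x),
    Finset.sum_add_distrib, ← Finset.mul_sum]

/-! ### equivariance -/

lemma comp_swap_swap_apply (x : Fin N → ℝ) (a b t : Fin N) :
    (x ∘ ⇑(Equiv.swap a b)) ((Equiv.swap a b) t) = x t := by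
  show x ((Equiv.swap a b) ((Equiv.swap a b) t)) = x t
  rw [Equiv.swap_apply_self]

lemma dunkl_swap (β : ℝ) (f : (Fin N → ℝ) → ℝ) (a b i : Fin N) (x : Fin N → ℝ) :
    Dunkl β i (fun y => f (y ∘ ⇑(Equiv.swap a b))) x
      = Dunkl β ((Equiv.swap a b) i) f (x ∘ ⇑(Equiv.swap a b)) := by
  rw [dunkl_apply, dunkl_apply]
  have hpd : pd i (fun y => f (y ∘ ⇑(Equiv.swap a b))) x
      = pd ((Equiv.swap a b) i) f (x ∘ ⇑(Equiv.swap a b)) := by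
    rw [pd_comp_perm, Equiv.symm_swap]
  rw [hpd]
  congr 2
  refine Finset.sum_bij' (fun k _ => (Equiv.swap a b) k) (fun m _ => (Equiv.swap a b) m)
    ?_ ?_ ?_ ?_ ?_
  · intro k hk
    exact Finset.mem_erase.mpr ⟨fun he => (Finset.mem_erase.mp hk).1
      ((Equiv.swap a b).injective he), Finset.mem_univ _⟩
  · intro m hm
    refine Finset.mem_erase.mpr ⟨fun he => (Finset.mem_erase.mp hm).1 ?_, Finset.mem_univ _⟩
    rw [← he, Equiv.swap_apply_self]
  · intro k _; exact Equiv.swap_apply_self _ _ _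
  · intro m _; exact Equiv.swap_apply_self _ _ _
  · intro k _
    simp only [Top]
    have hcomp : ((x ∘ ⇑(Equiv.swap a b)) ∘ ⇑(Equiv.swap ((Equiv.swap a b) i) ((Equiv.swap a b) k)))
        = (x ∘ ⇑(Equiv.swap i k)) ∘ ⇑(Equiv.swap a b) := by
      rw [comp_comp_swap, comp_comp_swap, Equiv.swap_apply_apply]
      congr 1
      have hinv : (Equiv.swap a b)⁻¹ = Equiv.swap a b := by
        rw [← Equiv.symm_swap]; rfl
      rw [hinv, ← mul_assoc, ← mul_assoc, Equiv.swap_mul_self, one_mul]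
    rw [hcomp, comp_swap_swap_apply x a b i, comp_swap_swap_apply x a b k]

/-! ### Leibniz rules for a coordinate factor -/

lemma dunkl_coord_mul_self {g : (Fin N → ℝ) → ℝ} (hg : SmO g) {x : Fin N → ℝ}
    (hx : Function.Injective x) (β : ℝ) (j : Fin N) :
    Dunkl β j (fun y => y j * g y) x
      = x j * Dunkl β j g x + g x + β * ∑ m ∈ univ.erase j, g (x ∘ ⇑(Equiv.swap j m)) := by
  rw [dunkl_apply, dunkl_apply, pd_coord_mul j j (sdiff hx hg), if_pos rfl]
  have htop : ∀ m ∈ univ.erase j, Top j m (fun y => y j * g y) x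
      = x j * Top j m g x + g (x ∘ ⇑(Equiv.swap j m)) := by
    intro m hm
    have hjm : j ≠ m := (Finset.ne_of_mem_erase hm).symm
    have hd := hne hx hjm
    simp only [Top]
    rw [comp_swap_left x j m]
    field_simp
    ring
  rw [Finset.sum_congr rfl htop, Finset.sum_add_distrib, ← Finset.mul_sum]
  ring

lemma dunkl_coord_mul_ne {g : (Fin N → ℝ) → ℝ} (hg : SmO g) {x : Fin N → ℝ}
    (hx : Function.Injective x) (β : ℝ) {k j : Fin N} (hkj : k ≠ j) :
    Dunkl β k (fun y => y j * g y) x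
      = x j * Dunkl β k g x - β * g (x ∘ ⇑(Equiv.swap k j)) := by
  rw [dunkl_apply, dunkl_apply, pd_coord_mul k j (sdiff hx hg), if_neg hkj, zero_add]
  have hjek : j ∈ univ.erase k := Finset.mem_erase.mpr ⟨hkj.symm, Finset.mem_univ _⟩
  rw [← Finset.add_sum_erase _ (fun m => Top k m (fun y => y j * g y) x) hjek,
      ← Finset.add_sum_erase _ (fun m => Top k m g x) hjek]
  have h1 : Top k j (fun y => y j * g y) x
      = x j * Top k j g x - g (x ∘ ⇑(Equiv.swap k j)) := by
    have hd := hne hx hkj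
    simp only [Top]
    rw [comp_swap_right x k j]
    field_simp
    ring
  have h2 : ∀ m ∈ (univ.erase k).erase j, Top k m (fun y => y j * g y) x
      = x j * Top k m g x := by
    intro m hm
    have hmj : m ≠ j := (Finset.mem_erase.mp hm).1
    have hmk : m ≠ k := (Finset.mem_erase.mp (Finset.mem_of_mem_erase hm)).1
    simp only [Top]
    rw [comp_swap_other x hkj.symm hmj.symm]
    ring
  rw [h1, Finset.sum_congr rfl h2, ← Finset.mul_sum]
  ring

/-! ### Delta-level lemmas -/

lemma delta_apply (β : ℝ) (f : (Fin N → ℝ) → ℝ) (x : Fin N → ℝ) :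
    DeltaOp β f x = ∑ k, Dunkl β k (Dunkl β k f) x := rfl

lemma smO_sum {ι : Type*} {s : Finset ι} {g : ι → (Fin N → ℝ) → ℝ}
    (hg : ∀ i ∈ s, SmO (g i)) : SmO (fun y => ∑ i ∈ s, g i y) :=
  fun y hy => ContDiffAt.sum fun i hi => hg i hi y hy

lemma smO_sub {g h : (Fin N → ℝ) → ℝ} (hg : SmO g) (hh : SmO h) :
    SmO (fun y => g y - h y) :=
  fun y hy => (hg y hy).sub (hh y hy)

lemma smO_const_mul (c : ℝ) {g : (Fin N → ℝ) → ℝ} (hg : SmO g) :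
    SmO (fun y => c * g y) :=
  fun y hy => contDiffAt_const.mul (hg y hy)

lemma smO_coord_mul (j : Fin N) {g : (Fin N → ℝ) → ℝ} (hg : SmO g) :
    SmO (fun y => y j * g y) :=
  fun y hy => ((ContinuousLinearMap.proj (R := ℝ) (φ := fun _ : Fin N => ℝ)
    j).contDiff.contDiffAt).mul (hg y hy)

lemma delta_congr {g h : (Fin N → ℝ) → ℝ} (hgh : ∀ y, Function.Injective y → g y = h y)
    {x : Fin N → ℝ} (hx : Function.Injective x) (β : ℝ) :
    DeltaOp β g x = DeltaOp β h x := by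
  rw [delta_apply, delta_apply]
  exact Finset.sum_congr rfl fun k _ =>
    dunkl_congr (fun y hy => dunkl_congr hgh hy β k) hx β k

lemma delta_sub {g h : (Fin N → ℝ) → ℝ} (hg : SmO g) (hh : SmO h) {x : Fin N → ℝ}
    (hx : Function.Injective x) (β : ℝ) :
    DeltaOp β (fun z => g z - h z) x = DeltaOp β g x - DeltaOp β h x := by
  rw [delta_apply, delta_apply, delta_apply, ← Finset.sum_sub_distrib]
  refine Finset.sum_congr rfl fun k _ => ?_
  have h1 : ∀ y, Function.Injective y → Dunkl β k (fun z => g z - h z) y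
      = (fun z => Dunkl β k g z - Dunkl β k h z) y :=
    fun y hy => dunkl_sub β k (sdiff hy hg) (sdiff hy hh)
  rw [dunkl_congr h1 hx β k]
  exact dunkl_sub β k (sdiff hx (smO_dunkl hg β k)) (sdiff hx (smO_dunkl hh β k))

lemma delta_const_mul (c : ℝ) {g : (Fin N → ℝ) → ℝ} (hg : SmO g) {x : Fin N → ℝ}
    (hx : Function.Injective x) (β : ℝ) :
    DeltaOp β (fun z => c * g z) x = c * DeltaOp β g x := by
  rw [delta_apply, delta_apply, Finset.mul_sum]
  refine Finset.sum_congr rfl fun k _ => ?_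
  have h1 : ∀ y, Function.Injective y → Dunkl β k (fun z => c * g z) y
      = (fun z => c * Dunkl β k g z) y :=
    fun y hy => dunkl_const_mul β c k (sdiff hy hg)
  rw [dunkl_congr h1 hx β k]
  exact dunkl_const_mul β c k (sdiff hx (smO_dunkl hg β k))

lemma delta_sum {ι : Type*} {s : Finset ι} {g : ι → (Fin N → ℝ) → ℝ}
    (hg : ∀ i ∈ s, SmO (g i)) {x : Fin N → ℝ} (hx : Function.Injective x) (β : ℝ) :
    DeltaOp β (fun z => ∑ i ∈ s, g i z) x = ∑ i ∈ s, DeltaOp β (g i) x := by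
  rw [delta_apply]
  have hterm : ∀ k : Fin N, Dunkl β k (Dunkl β k (fun z => ∑ i ∈ s, g i z)) x
      = ∑ i ∈ s, Dunkl β k (Dunkl β k (g i)) x := by
    intro k
    have h1 : ∀ y, Function.Injective y → Dunkl β k (fun z => ∑ i ∈ s, g i z) y
        = (fun z => ∑ i ∈ s, Dunkl β k (g i) z) y :=
      fun y hy => dunkl_sum β k (fun i hi => sdiff hy (hg i hi))
    rw [dunkl_congr h1 hx β k]
    exact dunkl_sum β k fun i hi => sdiff hx (smO_dunkl (hg i hi) β k)
  rw [Finset.sum_congr rfl fun k _ => hterm k, Finset.sum_comm]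
  exact Finset.sum_congr rfl fun i _ => (delta_apply β (g i) x).symm

lemma delta_swap (β : ℝ) (f : (Fin N → ℝ) → ℝ) (a b : Fin N) (x : Fin N → ℝ) :
    DeltaOp β (fun y => f (y ∘ ⇑(Equiv.swap a b))) x = DeltaOp β f (x ∘ ⇑(Equiv.swap a b)) := by
  rw [delta_apply, delta_apply]
  have hterm : ∀ k : Fin N, Dunkl β k (Dunkl β k (fun y => f (y ∘ ⇑(Equiv.swap a b)))) x
      = Dunkl β ((Equiv.swap a b) k) (Dunkl β ((Equiv.swap a b) k) f) (x ∘ ⇑(Equiv.swap a b)) := by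
    intro k
    have h1 : Dunkl β k (fun y => f (y ∘ ⇑(Equiv.swap a b)))
        = fun y => Dunkl β ((Equiv.swap a b) k) f (y ∘ ⇑(Equiv.swap a b)) :=
      funext fun y => dunkl_swap β f a b k y
    rw [h1, dunkl_swap β (Dunkl β ((Equiv.swap a b) k) f) a b k x]
  rw [Finset.sum_congr rfl fun k _ => hterm k]
  exact Equiv.sum_comp (Equiv.swap a b) fun k => Dunkl β k (Dunkl β k f) (x ∘ ⇑(Equiv.swap a b))

lemma delta_coord_mul {g : (Fin N → ℝ) → ℝ} (hg : SmO g) {x : Fin N → ℝ}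
    (hx : Function.Injective x) (β : ℝ) (j : Fin N) :
    DeltaOp β (fun y => y j * g y) x
      = x j * DeltaOp β g x + 2 * Dunkl β j g x := by
  rw [delta_apply, delta_apply,
    ← Finset.add_sum_erase _ (fun k => Dunkl β k (Dunkl β k (fun y => y j * g y)) x)
      (Finset.mem_univ j),
    ← Finset.add_sum_erase _ (fun k => Dunkl β k (Dunkl β k g) x) (Finset.mem_univ j)]
  have hDg : ∀ k : Fin N, SmO (Dunkl β k g) := fun k => smO_dunkl hg β k
  have hTj : Dunkl β j (Dunkl β j (fun y => y j * g y)) x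
      = x j * Dunkl β j (Dunkl β j g) x + 2 * Dunkl β j g x
        + β * ∑ m ∈ univ.erase j, Dunkl β j g (x ∘ ⇑(Equiv.swap j m))
        + β * ∑ m ∈ univ.erase j, Dunkl β m g (x ∘ ⇑(Equiv.swap j m)) := by
    have hinner : ∀ y, Function.Injective y → Dunkl β j (fun z => z j * g z) y
        = (fun z => (z j * Dunkl β j g z + g z)
            + β * ∑ m ∈ univ.erase j, g (z ∘ ⇑(Equiv.swap j m))) y := by
      intro y hy
      rw [dunkl_coord_mul_self hg hy β j]
    rw [dunkl_congr hinner hx β j]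
    have hd1 : DifferentiableAt ℝ (fun z => z j * Dunkl β j g z + g z) x :=
      (sdiff hx (smO_coord_mul j (hDg j))).add (sdiff hx hg)
    have hd2 : DifferentiableAt ℝ
        (fun z => β * ∑ m ∈ univ.erase j, g (z ∘ ⇑(Equiv.swap j m))) x :=
      ((DifferentiableAt.fun_sum fun m _ => sdiff hx (smO_comp_perm hg _)).const_mul β)
    rw [dunkl_add β j hd1 hd2,
      dunkl_add β j (sdiff hx (smO_coord_mul j (hDg j))) (sdiff hx hg),
      dunkl_coord_mul_self (hDg j) hx β j,
      dunkl_const_mul β β j (DifferentiableAt.fun_sum fun m _ => sdiff hx (smO_comp_perm hg _)),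
      dunkl_sum β j (fun m _ => sdiff hx (smO_comp_perm hg _))]
    have hswap : ∀ m ∈ univ.erase j, Dunkl β j (fun y => g (y ∘ ⇑(Equiv.swap j m))) x
        = Dunkl β m g (x ∘ ⇑(Equiv.swap j m)) := by
      intro m _
      rw [dunkl_swap β g j m j x, Equiv.swap_apply_left]
    rw [Finset.sum_congr rfl hswap]
    ring
  have hTk : ∀ k ∈ univ.erase j, Dunkl β k (Dunkl β k (fun y => y j * g y)) x
      = x j * Dunkl β k (Dunkl β k g) x - β * Dunkl β k g (x ∘ ⇑(Equiv.swap j k))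
        - β * Dunkl β j g (x ∘ ⇑(Equiv.swap j k)) := by
    intro k hk
    have hkj : k ≠ j := Finset.ne_of_mem_erase hk
    have hinner : ∀ y, Function.Injective y → Dunkl β k (fun z => z j * g z) y
        = (fun z => z j * Dunkl β k g z - β * g (z ∘ ⇑(Equiv.swap k j))) y :=
      fun y hy => dunkl_coord_mul_ne hg hy β hkj
    rw [dunkl_congr hinner hx β k,
      dunkl_sub β k (sdiff hx (smO_coord_mul j (hDg k)))
        ((sdiff hx (smO_comp_perm hg _)).const_mul β),
      dunkl_coord_mul_ne (hDg k) hx β hkj,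
      dunkl_const_mul β β k (sdiff hx (smO_comp_perm hg _)),
      dunkl_swap β g k j k x, Equiv.swap_apply_left, Equiv.swap_comm k j]
  rw [hTj, Finset.sum_congr rfl hTk, Finset.sum_sub_distrib, Finset.sum_sub_distrib,
    ← Finset.mul_sum, ← Finset.mul_sum, ← Finset.mul_sum]
  ring

/-! ### rewriting the Cherednik operator -/

lemma cher_eq (β : ℝ) (j : Fin N) (g : (Fin N → ℝ) → ℝ) {x : Fin N → ℝ}
    (hx : Function.Injective x) :
    Cher β j g x = x j * Dunkl β j g x
      - β * ∑ k ∈ univ.filter (fun k => j < k), (g x - g (x ∘ ⇑(Equiv.swap j k)))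
      - β * (j : ℕ) * g x := by
  have hf1 : (univ.erase j).filter (fun k => k < j) = univ.filter (fun k => k < j) := by
    ext k
    simp only [Finset.mem_filter, Finset.mem_erase, Finset.mem_univ, true_and, and_true]
    exact ⟨fun h => h.2, fun h => ⟨ne_of_lt h, h⟩⟩
  have hf2 : (univ.erase j).filter (fun k => ¬ k < j) = univ.filter (fun k => j < k) := by
    ext k
    simp only [Finset.mem_filter, Finset.mem_erase, Finset.mem_univ, true_and, and_true]
    constructor
    · rintro ⟨hne, hnlt⟩
      exact lt_of_le_of_ne (not_lt.mp hnlt) hne.symm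
    · intro h
      exact ⟨(ne_of_lt h).symm, not_lt.mpr (le_of_lt h)⟩
  have key : ∑ k ∈ univ.erase j, x j * Top j k g x
      = ∑ k ∈ univ.filter (fun k => k < j),
          (x j / (x j - x k)) * (g x - g (x ∘ ⇑(Equiv.swap j k)))
        + (∑ k ∈ univ.filter (fun k => j < k),
            (x k / (x j - x k)) * (g x - g (x ∘ ⇑(Equiv.swap j k)))
          + ∑ k ∈ univ.filter (fun k => j < k), (g x - g (x ∘ ⇑(Equiv.swap j k)))) := by
    rw [← Finset.sum_filter_add_sum_filter_not (univ.erase j) (fun k => k < j)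
        (fun k => x j * Top j k g x), hf1, hf2]
    congr 1
    · refine Finset.sum_congr rfl fun k hk => ?_
      simp only [Top]
      ring
    · rw [← Finset.sum_add_distrib]
      refine Finset.sum_congr rfl fun k hk => ?_
      have hjk : j ≠ k := ne_of_lt (Finset.mem_filter.mp hk).2
      have hd := hne hx hjk
      simp only [Top]
      field_simp
      ring
  show _ = x j * Dunkl β j g x - _ - _
  rw [dunkl_apply,
    show x j * (pd j g x + β * ∑ k ∈ univ.erase j, Top j k g x)
      = x j * pd j g x + β * ∑ k ∈ univ.erase j, x j * Top j k g x from by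
        rw [← Finset.mul_sum]; ring,
    key]
  unfold Cher
  ring

/-! ### the main commutation results -/

lemma dunkl_delta_comm {f : (Fin N → ℝ) → ℝ} (hf : SmO f) {x : Fin N → ℝ}
    (hx : Function.Injective x) (β : ℝ) (j : Fin N) :
    Dunkl β j (DeltaOp β f) x = DeltaOp β (Dunkl β j f) x := by
  have h1 : Dunkl β j (DeltaOp β f) x = ∑ k, Dunkl β j (Dunkl β k (Dunkl β k f)) x :=
    dunkl_sum β j fun k _ => sdiff hx (smO_dunkl (smO_dunkl hf β k) β k)
  have h2 : ∀ k : Fin N, Dunkl β j (Dunkl β k (Dunkl β k f)) x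
      = Dunkl β k (Dunkl β k (Dunkl β j f)) x := by
    intro k
    rw [dunkl_comm (smO_dunkl hf β k) hx β j k]
    exact dunkl_congr (fun y hy => dunkl_comm hf hy β j k) hx β k
  rw [h1, Finset.sum_congr rfl fun k _ => h2 k]
  rfl


end DunklAux

/-- each rational Dunkl operator commutes with `Δ = ∑_j D_j²`, and the
Cherednik operator satisfies `[𝒟_j, Δ] = −2 D_j²` (on smooth functions, away from the
diagonals). -/
theorem delta_commutators {N : ℕ} (β : ℝ) (f : (Fin N → ℝ) → ℝ)
    (hf : ContDiff ℝ (⊤ : ℕ∞) f) (j : Fin N) (x : Fin N → ℝ)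
    (hx : Function.Injective x) :
    Dunkl β j (DeltaOp β f) x = DeltaOp β (Dunkl β j f) x ∧
    Cher β j (DeltaOp β f) x - DeltaOp β (Cher β j f) x
      = -2 * Dunkl β j (Dunkl β j f) x := by
  have hf' : DunklAux.SmO f := fun y _ => hf.contDiffAt
  have conj1 : Dunkl β j (DeltaOp β f) x = DeltaOp β (Dunkl β j f) x :=
    DunklAux.dunkl_delta_comm hf' hx β j
  refine ⟨conj1, ?_⟩
  have hDj : DunklAux.SmO (Dunkl β j f) := DunklAux.smO_dunkl hf' β j
  have hS2 : DunklAux.SmO (fun z => ∑ k ∈ univ.filter (fun k => j < k),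
      (f z - f (z ∘ ⇑(Equiv.swap j k)))) :=
    DunklAux.smO_sum fun k _ => DunklAux.smO_sub hf' (DunklAux.smO_comp_perm hf' _)
  have hg1 : DunklAux.SmO (fun z => z j * Dunkl β j f z
      - β * ∑ k ∈ univ.filter (fun k => j < k), (f z - f (z ∘ ⇑(Equiv.swap j k)))) :=
    DunklAux.smO_sub (DunklAux.smO_coord_mul j hDj) (DunklAux.smO_const_mul β hS2)
  have hXeq : ∀ y, Function.Injective y → Cher β j f y
      = (fun z => (z j * Dunkl β j f z
          - β * ∑ k ∈ univ.filter (fun k => j < k), (f z - f (z ∘ ⇑(Equiv.swap j k))))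
          - β * (j : ℕ) * f z) y := by
    intro y hy
    rw [DunklAux.cher_eq β j f hy]
  have hterm : ∀ k ∈ univ.filter (fun k => j < k),
      DeltaOp β (fun z => f z - f (z ∘ ⇑(Equiv.swap j k))) x
        = DeltaOp β f x - DeltaOp β f (x ∘ ⇑(Equiv.swap j k)) := by
    intro k _
    rw [DunklAux.delta_sub hf' (DunklAux.smO_comp_perm hf' _) hx β,
      DunklAux.delta_swap β f j k x]
  rw [DunklAux.cher_eq β j (DeltaOp β f) hx,
    DunklAux.delta_congr hXeq hx β,
    DunklAux.delta_sub hg1 (DunklAux.smO_const_mul (β * (j : ℕ)) hf') hx β,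
    DunklAux.delta_sub (DunklAux.smO_coord_mul j hDj) (DunklAux.smO_const_mul β hS2) hx β,
    DunklAux.delta_const_mul (β * (j : ℕ)) hf' hx β,
    DunklAux.delta_const_mul β hS2 hx β,
    DunklAux.delta_coord_mul hDj hx β j,
    DunklAux.delta_sum (fun k _ => DunklAux.smO_sub hf' (DunklAux.smO_comp_perm hf' _)) hx β,
    Finset.sum_congr rfl hterm, ← conj1]
  ring
end

section
/- The operators L_n = ∑_j ln|x_j| (x_j∂_j)^{n+1} (for n ≥ −1, say, interpreted formally with L_{n−2} defined via (x_j∂_j)^{n−1}) satisfy the centerless Virasoro algebra relations [L_n, L_m] = (n−m)L_{n+m}, and together with H_n = ∑_j (x_j∂_j)^n they satisfy [H_n, L_m] = n H_{n+m}. -/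
open Finset

/-- The Euler operator `x_j ∂_j` in the variable `j`. -/
noncomputable def Eul {N : ℕ} (j : Fin N) : ((Fin N → ℝ) → ℝ) → ((Fin N → ℝ) → ℝ) :=
  fun f x => x j * pd j f x

/-- `H_n = ∑_j (x_j ∂_j)^n`. -/
noncomputable def Hop {N : ℕ} (n : ℕ) (f : (Fin N → ℝ) → ℝ) : (Fin N → ℝ) → ℝ :=
  fun x => ∑ j, (Eul j)^[n] f x

/-- `L_n = ∑_j ln|x_j| (x_j ∂_j)^{n+1}` (for `n ≥ 0`; `L_{n-2} = ∑_j ln|x_j|(x_j∂_j)^{n-1}`). -/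
noncomputable def Lop {N : ℕ} (n : ℕ) (f : (Fin N → ℝ) → ℝ) : (Fin N → ℝ) → ℝ :=
  fun x => ∑ j, Real.log |x j| * (Eul j)^[n + 1] f x

variable {N : ℕ} {f g h : (Fin N → ℝ) → ℝ} {j k : Fin N} {x : Fin N → ℝ}

/-- slice differentiability -/
def SD (j : Fin N) (f : (Fin N → ℝ) → ℝ) (x : Fin N → ℝ) : Prop :=
  DifferentiableAt ℝ (fun t => f (Function.update x j t)) (x j)

theorem hasDerivAt_slice (hf : DifferentiableAt ℝ f x) :
    HasDerivAt (fun t => f (Function.update x j t)) (fderiv ℝ f x (Pi.single j 1)) (x j) := by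
  have h1 : HasDerivAt (Function.update x j) (Pi.single j (1:ℝ)) (x j) :=
    hasDerivAt_update x j (x j)
  have h2 : HasFDerivAt f (fderiv ℝ f x) (Function.update x j (x j)) := by
    rw [Function.update_eq_self]; exact hf.hasFDerivAt
  exact h2.comp_hasDerivAt (x j) h1

theorem DifferentiableAt.sd (hf : DifferentiableAt ℝ f x) : SD j f x :=
  (hasDerivAt_slice hf).differentiableAt

theorem pd_eq_fderiv (hf : DifferentiableAt ℝ f x) :
    pd j f x = fderiv ℝ f x (Pi.single j 1) := (hasDerivAt_slice hf).deriv

theorem pd_contDiff (j : Fin N) (hf : ContDiff ℝ (⊤ : ℕ∞) f) : ContDiff ℝ (⊤ : ℕ∞) (pd j f) := by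
  have : pd j f = fun y => fderiv ℝ f y (Pi.single j 1) := by
    funext y
    exact pd_eq_fderiv (hf.differentiable (by simp)).differentiableAt
  rw [this]
  exact (ContinuousLinearMap.apply ℝ ℝ (Pi.single j 1)).contDiff.comp
    (hf.fderiv_right (m := (⊤ : ℕ∞)) (by simp))

theorem eul_contDiff (j : Fin N) (hf : ContDiff ℝ (⊤ : ℕ∞) f) : ContDiff ℝ (⊤ : ℕ∞) (Eul j f) :=
  (contDiff_apply ℝ ℝ j).mul (pd_contDiff j hf)

theorem eul_iter_contDiff (j : Fin N) (hf : ContDiff ℝ (⊤ : ℕ∞) f) (p : ℕ) : ContDiff ℝ (⊤ : ℕ∞) ((Eul j)^[p] f) := by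
  induction p with
  | zero => exact hf
  | succ p ih => rw [Function.iterate_succ_apply']; exact eul_contDiff j ih


theorem pd_comm (hf : ContDiff ℝ (⊤ : ℕ∞) f) : pd j (pd k f) x = pd k (pd j f) x := by
  have hdf : Differentiable ℝ f := hf.differentiable (by simp)
  have hf' : ContDiff ℝ (⊤ : ℕ∞) (fderiv ℝ f) := hf.fderiv_right (by simp)
  have key : ∀ (a b : Fin N), pd a (pd b f) x =
      fderiv ℝ (fderiv ℝ f) x (Pi.single a 1) (Pi.single b 1) := by
    intro a b
    have hpdb : pd b f = fun y => fderiv ℝ f y (Pi.single b 1) := by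
      funext y; exact pd_eq_fderiv (hdf y)
    rw [pd_eq_fderiv ((pd_contDiff b hf).differentiable (by simp) x), hpdb]
    have h1 : HasFDerivAt (fderiv ℝ f) (fderiv ℝ (fderiv ℝ f) x) x :=
      ((hf'.differentiable (by simp)) x).hasFDerivAt
    have h2 := h1.clm_apply (hasFDerivAt_const (Pi.single b (1:ℝ)) x)
    rw [h2.fderiv]
    simp
  rw [key j k, key k j]
  exact second_derivative_symmetric (fun y => (hdf y).hasFDerivAt)
    ((hf'.differentiable (by simp) x).hasFDerivAt) _ _

theorem SD.hasDerivAt' (hg : SD j g x) :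
    HasDerivAt (fun t => g (Function.update x j t)) (pd j g x) (x j) :=
  DifferentiableAt.hasDerivAt hg

theorem pd_mul (hg : SD j g x) (hh : SD j h x) :
    pd j (fun y => g y * h y) x = pd j g x * h x + g x * pd j h x := by
  have := (hg.hasDerivAt'.fun_mul hh.hasDerivAt').deriv
  simpa [pd] using this

theorem sd_coord (a b : Fin N) : SD a (fun z : Fin N → ℝ => z b) x := by
  rcases eq_or_ne a b with rfl | hab
  · simpa [SD] using differentiableAt_id'
  · simpa [SD, Function.update_of_ne hab.symm] using differentiableAt_const (x b)

theorem pd_coord_ne (hjk : j ≠ k) : pd j (fun y => y k) x = 0 := by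
  simp [pd, Function.update_of_ne hjk.symm]

theorem ContDiff.sd (hf : ContDiff ℝ (⊤ : ℕ∞) f) : SD j f x :=
  ((hf.differentiable (by simp)).differentiableAt).sd

theorem eul_comm (hf : ContDiff ℝ (⊤ : ℕ∞) f) : Eul j (Eul k f) = Eul k (Eul j f) := by
  have key : ∀ (a b : Fin N), a ≠ b → ∀ x : Fin N → ℝ,
      Eul a (Eul b f) x = x a * x b * pd a (pd b f) x := by
    intro a b hab x
    show x a * pd a (fun y => y b * pd b f y) x = _
    rw [pd_mul (sd_coord a b) (pd_contDiff b hf).sd, pd_coord_ne hab]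
    ring
  rcases eq_or_ne j k with rfl | hjk
  · rfl
  funext x
  rw [key j k hjk x, key k j hjk.symm x, pd_comm hf]
  ring

theorem eul_comm_iter (j k : Fin N) (hf : ContDiff ℝ (⊤ : ℕ∞) f) (a b : ℕ) :
    (Eul j)^[a] ((Eul k)^[b] f) = (Eul k)^[b] ((Eul j)^[a] f) := by
  have step : ∀ (g : (Fin N → ℝ) → ℝ), ContDiff ℝ (⊤ : ℕ∞) g → ∀ b : ℕ,
      Eul j ((Eul k)^[b] g) = (Eul k)^[b] (Eul j g) := by
    intro g hg b
    induction b generalizing g with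
    | zero => rfl
    | succ b ih =>
      rw [Function.iterate_succ_apply', Function.iterate_succ_apply',
        eul_comm (eul_iter_contDiff k hg b), ih g hg]
  induction a generalizing f with
  | zero => rfl
  | succ a ih =>
    rw [Function.iterate_succ_apply, Function.iterate_succ_apply,
      step f hf b, ih (eul_contDiff j hf)]

theorem slice_log_mul_eq :
    (fun t => (fun y => Real.log |y k| * h y) (Function.update x k t)) =
      fun t => Real.log t * h (Function.update x k t) := by
  funext t; simp [Real.log_abs]

theorem hasDerivAt_slice_log_mul (hh : ContDiff ℝ (⊤ : ℕ∞) h) (hx : x k ≠ 0) :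
    HasDerivAt (fun t => (fun y => Real.log |y k| * h y) (Function.update x k t))
      ((x k)⁻¹ * h x + Real.log |x k| * pd k h x) (x k) := by
  rw [slice_log_mul_eq, Real.log_abs]
  have := (Real.hasDerivAt_log hx).fun_mul (hh.sd (j := k) (x := x)).hasDerivAt'
  simpa using this

theorem sd_log_mul (hh : ContDiff ℝ (⊤ : ℕ∞) h) (hx : x k ≠ 0) :
    SD k (fun y => Real.log |y k| * h y) x :=
  (hasDerivAt_slice_log_mul hh hx).differentiableAt

theorem eul_log_mul (hh : ContDiff ℝ (⊤ : ℕ∞) h) (hx : x k ≠ 0) :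
    Eul k (fun y => Real.log |y k| * h y) x = h x + Real.log |x k| * Eul k h x := by
  show x k * pd k _ x = _
  rw [show pd k (fun y => Real.log |y k| * h y) x
      = (x k)⁻¹ * h x + Real.log |x k| * pd k h x from
    (hasDerivAt_slice_log_mul hh hx).deriv]
  show _ = _ + Real.log |x k| * (x k * pd k h x)
  field_simp

theorem sd_logc_mul (hjk : j ≠ k) (hh : ContDiff ℝ (⊤ : ℕ∞) h) :
    SD k (fun y => Real.log |y j| * h y) x := by
  have : (fun t => (fun y => Real.log |y j| * h y) (Function.update x k t)) =
      fun t => Real.log |x j| * h (Function.update x k t) := by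
    funext t; simp [Function.update_of_ne hjk]
  unfold SD
  rw [this]
  exact (hh.sd (j := k) (x := x) : DifferentiableAt ℝ _ _).const_mul _

theorem eul_logc_mul (hjk : j ≠ k) (hh : ContDiff ℝ (⊤ : ℕ∞) h) :
    Eul k (fun y => Real.log |y j| * h y) x = Real.log |x j| * Eul k h x := by
  show x k * pd k _ x = _
  have : (fun t => (fun y => Real.log |y j| * h y) (Function.update x k t)) =
      fun t => Real.log |x j| * h (Function.update x k t) := by
    funext t; simp [Function.update_of_ne hjk]
  have hd : pd k (fun y => Real.log |y j| * h y) x = Real.log |x j| * pd k h x := by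
    unfold pd
    rw [this]
    exact deriv_const_mul _ (hh.sd (j := k) (x := x))
  rw [hd]; show _ = Real.log |x j| * (x k * pd k h x); ring

theorem eul_sum {s : Finset (Fin N)} {F : Fin N → (Fin N → ℝ) → ℝ}
    (hF : ∀ i ∈ s, SD k (F i) x) :
    Eul k (fun y => ∑ i ∈ s, F i y) x = ∑ i ∈ s, Eul k (F i) x := by
  show x k * pd k _ x = _
  have : HasDerivAt (fun t => (fun y => ∑ i ∈ s, F i y) (Function.update x k t))
      (∑ i ∈ s, pd k (F i) x) (x k) := HasDerivAt.fun_sum fun i hi => (hF i hi).hasDerivAt'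
  rw [show pd k (fun y => ∑ i ∈ s, F i y) x = ∑ i ∈ s, pd k (F i) x from this.deriv,
    Finset.mul_sum]
  rfl

theorem eul_add (hg : SD k g x) (hh : SD k h x) :
    Eul k (fun y => g y + h y) x = Eul k g x + Eul k h x := by
  show x k * pd k _ x = _
  rw [show pd k (fun y => g y + h y) x = pd k g x + pd k h x from
    (hg.hasDerivAt'.add hh.hasDerivAt').deriv]
  simp only [Eul]; ring

theorem eul_const_mul (c : ℝ) (hh : SD k h x) :
    Eul k (fun y => c * h y) x = c * Eul k h x := by
  show x k * pd k _ x = _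
  rw [show pd k (fun y => c * h y) x = c * pd k h x from (hh.hasDerivAt'.const_mul c).deriv]
  simp only [Eul]; ring

theorem eul_congr_slice {F G : (Fin N → ℝ) → ℝ}
    (hev : ∀ᶠ t in nhds (x k), F (Function.update x k t) = G (Function.update x k t)) :
    Eul k F x = Eul k G x := by
  show x k * pd k F x = x k * pd k G x
  unfold pd
  rw [Filter.EventuallyEq.deriv_eq hev]

theorem sd_lop {mm : ℕ} (hg : ContDiff ℝ (⊤ : ℕ∞) g) (hx : x k ≠ 0) : SD k (Lop mm g) x := by
  have : (fun t => Lop mm g (Function.update x k t)) =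
      fun t => ∑ j, (fun y => Real.log |y j| * (Eul j)^[mm + 1] g y) (Function.update x k t) := rfl
  unfold SD
  rw [this]
  apply DifferentiableAt.fun_sum
  intro i _
  rcases eq_or_ne i k with rfl | hik
  · exact sd_log_mul (eul_iter_contDiff i hg (mm+1)) hx
  · exact sd_logc_mul hik (eul_iter_contDiff i hg (mm+1))

theorem SD.const_mul' (hh : SD k h x) (c : ℝ) : SD k (fun y => c * h y) x :=
  DifferentiableAt.const_mul hh c

theorem eul_lop {m : ℕ} (hg : ContDiff ℝ (⊤ : ℕ∞) g) (hx : x k ≠ 0) :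
    Eul k (Lop m g) x = Lop m (Eul k g) x + (Eul k)^[m + 1] g x := by
  have hterm : ∀ i : Fin N,
      Eul k (fun y => Real.log |y i| * (Eul i)^[m+1] g y) x =
        Real.log |x i| * (Eul i)^[m+1] (Eul k g) x
          + (if i = k then (Eul k)^[m+1] g x else 0) := by
    intro i
    rcases eq_or_ne i k with rfl | hik
    · rw [eul_log_mul (eul_iter_contDiff i hg (m+1)) hx]
      have : Eul i ((Eul i)^[m+1] g) = (Eul i)^[m+1] (Eul i g) := by
        exact (Function.iterate_succ_apply' (Eul i) (m+1) g).symm.trans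
          (Function.iterate_succ_apply (Eul i) (m+1) g)
      rw [this]
      simp [add_comm]
    · rw [eul_logc_mul hik (eul_iter_contDiff i hg (m+1))]
      have : Eul k ((Eul i)^[m+1] g) x = (Eul i)^[m+1] (Eul k g) x := by
        have := eul_comm_iter k i hg 1 (m+1)
        simpa using congrFun this x
      rw [this]
      simp [hik]
  have hsum : Eul k (Lop m g) x
      = ∑ i, Eul k (fun y => Real.log |y i| * (Eul i)^[m+1] g y) x := by
    have : Lop m g = fun y => ∑ i, Real.log |y i| * (Eul i)^[m+1] g y := rfl
    rw [this, eul_sum]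
    intro i _
    rcases eq_or_ne i k with rfl | hik
    · exact sd_log_mul (eul_iter_contDiff i hg (m+1)) hx
    · exact sd_logc_mul hik (eul_iter_contDiff i hg (m+1))
  rw [hsum]
  simp only [hterm]
  rw [Finset.sum_add_distrib, Finset.sum_ite_eq' univ k]
  simp [Lop]

theorem eul_iter_lop {m : ℕ} (hf : ContDiff ℝ (⊤ : ℕ∞) f) (p : ℕ) :
    ∀ x : Fin N → ℝ, x k ≠ 0 →
    (Eul k)^[p] (Lop m f) x = Lop m ((Eul k)^[p] f) x + p * (Eul k)^[p + m] f x := by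
  induction p with
  | zero => intro x hx; simp
  | succ p ih =>
    intro x hx
    rw [Function.iterate_succ_apply']
    have hstep : Eul k ((Eul k)^[p] (Lop m f)) x =
        Eul k (fun y => Lop m ((Eul k)^[p] f) y + (p : ℝ) * (Eul k)^[p + m] f y) x := by
      apply eul_congr_slice
      filter_upwards [eventually_ne_nhds hx] with t ht
      have : (Function.update x k t) k ≠ 0 := by simpa using ht
      exact ih (Function.update x k t) this
    rw [hstep]
    have hsm : ContDiff ℝ (⊤ : ℕ∞) ((Eul k)^[p] f) := eul_iter_contDiff k hf p
    rw [eul_add (sd_lop hsm hx) (((eul_iter_contDiff k hf (p+m)).sd).const_mul' _)]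
    rw [eul_lop hsm hx, eul_const_mul _ (eul_iter_contDiff k hf (p+m)).sd,
      ← Function.iterate_succ_apply' (Eul k) p f,
      ← Function.iterate_succ_apply' (Eul k) (p+m) f,
      ← Function.iterate_add_apply (Eul k) (m+1) p f]
    simp only [Nat.succ_eq_add_one]
    have e1 : m + 1 + p = p + 1 + m := by ring
    have e2 : p + m + 1 = p + 1 + m := by ring
    rw [e1, e2]
    push_cast
    ring

theorem eul_iter_sum {F : Fin N → (Fin N → ℝ) → ℝ} (hF : ∀ i, ContDiff ℝ (⊤ : ℕ∞) (F i)) (p : ℕ) :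
    (Eul j)^[p] (fun y => ∑ i, F i y) = fun y => ∑ i, (Eul j)^[p] (F i) y := by
  induction p generalizing F with
  | zero => rfl
  | succ p ih =>
    rw [Function.iterate_succ_apply,
      show Eul j (fun y => ∑ i, F i y) = fun y => ∑ i, Eul j (F i) y from
        funext fun y => eul_sum fun i _ => (hF i).sd]
    rw [ih fun i => eul_contDiff j (hF i)]
    funext y
    refine Finset.sum_congr rfl fun i _ => ?_
    rw [← Function.iterate_succ_apply]


/-- the `L_n` satisfy the centerless Virasoro relations
`[L_n, L_m] = (n − m) L_{n+m}`, and together with `H_n = ∑_j (x_j∂_j)^n` they satisfy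
`[H_n, L_m] = n H_{n+m}` (on smooth functions, away from the hyperplanes `x_j = 0`). -/
theorem virasoro_relations {N : ℕ} (n m : ℕ) (f : (Fin N → ℝ) → ℝ)
    (hf : ContDiff ℝ (⊤ : ℕ∞) f) (x : Fin N → ℝ) (hx : ∀ j, x j ≠ 0) :
    Lop n (Lop m f) x - Lop m (Lop n f) x = ((n : ℝ) - m) * Lop (n + m) f x ∧
    Hop n (Lop m f) x - Lop m (Hop n f) x = (n : ℝ) * Hop (n + m) f x := by
  have key : ∀ a b : ℕ, ∀ k : Fin N,
      (Eul k)^[a] (Lop b f) x = Lop b ((Eul k)^[a] f) x + a * (Eul k)^[a + b] f x :=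
    fun a b k => eul_iter_lop hf a x (hx k)
  constructor
  · -- Virasoro part
    have expand : ∀ a b : ℕ, Lop a (Lop b f) x =
        (∑ k, ∑ j, Real.log |x k| * (Real.log |x j| *
          (Eul j)^[b + 1] ((Eul k)^[a + 1] f) x))
        + ((a : ℝ) + 1) * Lop (a + b) f x := by
      intro a b
      show ∑ k, Real.log |x k| * (Eul k)^[a+1] (Lop b f) x = _
      have : ∀ k : Fin N, Real.log |x k| * (Eul k)^[a+1] (Lop b f) x =
          (∑ j, Real.log |x k| * (Real.log |x j| * (Eul j)^[b+1] ((Eul k)^[a+1] f) x))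
          + ((a:ℝ)+1) * (Real.log |x k| * (Eul k)^[a + b + 1] f x) := by
        intro k
        rw [key (a+1) b k]
        have he : a + 1 + b = a + b + 1 := by ring
        rw [he]
        show Real.log |x k| * ((∑ j, Real.log |x j| * (Eul j)^[b+1] ((Eul k)^[a+1] f) x)
          + (↑(a+1)) * (Eul k)^[a+b+1] f x) = _
        push_cast
        rw [mul_add, Finset.mul_sum]
        congr 1
        ring
      simp only [this]
      rw [Finset.sum_add_distrib]
      congr 1
      show _ = ((a:ℝ)+1) * ∑ k, Real.log |x k| * (Eul k)^[a + b + 1] f x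
      rw [Finset.mul_sum]
    have sym : (∑ k, ∑ j, Real.log |x k| * (Real.log |x j| *
          (Eul j)^[m + 1] ((Eul k)^[n + 1] f) x))
        = ∑ k, ∑ j, Real.log |x k| * (Real.log |x j| *
          (Eul j)^[n + 1] ((Eul k)^[m + 1] f) x) := by
      rw [Finset.sum_comm]
      refine Finset.sum_congr rfl fun k _ => Finset.sum_congr rfl fun j _ => ?_
      rw [show (Eul k)^[m+1] ((Eul j)^[n+1] f) = (Eul j)^[n+1] ((Eul k)^[m+1] f) from
        eul_comm_iter k j hf (m+1) (n+1)]
      ring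
    rw [expand n m, expand m n, sym, show m + n = n + m by ring]
    ring
  · -- Heisenberg part
    have h1 : Hop n (Lop m f) x = ∑ k : Fin N,
        (Lop m ((Eul k)^[n] f) x + (n : ℝ) * (Eul k)^[n + m] f x) :=
      Finset.sum_congr rfl fun k _ => key n m k
    have h2 : Lop m (Hop n f) x = ∑ k : Fin N, Lop m ((Eul k)^[n] f) x := by
      show ∑ j, Real.log |x j| * (Eul j)^[m+1] (Hop n f) x = _
      have hH : ∀ j : Fin N, (Eul j)^[m+1] (Hop n f) x
          = ∑ k, (Eul j)^[m+1] ((Eul k)^[n] f) x := by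
        intro j
        rw [show Hop n f = fun y => ∑ k, (Eul k)^[n] f y from rfl,
          eul_iter_sum (fun k => eul_iter_contDiff k hf n) (m+1)]
      simp only [hH, Finset.mul_sum]
      rw [Finset.sum_comm]
      rfl
    rw [h1, h2, Finset.sum_add_distrib]
    show _ + ∑ k : Fin N, (n:ℝ) * (Eul k)^[n+m] f x - _ = (n:ℝ) * Hop (n+m) f x
    rw [show (Hop (n+m) f x) = ∑ k : Fin N, (Eul k)^[n+m] f x from rfl, Finset.mul_sum]
    ring
end
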